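/- Let n ≥ 1, let x ∈ ℝⁿ be a nonzero vector, r ∈ ℝⁿ, and λ > 0. Define f : ℝ → ℝ by f(α) = (1/(2n))‖r − α·x‖₂² + λ|α|. Then a point α* ∈ ℝ is a minimizer of f with α* < 0 if and only if ⟨x, r⟩ < −nλ. -/

import Mathlib

open Finset

/-!
Expanding the square, `f(α) = R/(2n) + (S/n)/2 · α² − (P/n) · α + λ|α|` with `S = ‖x‖² > 0`,
`P = ⟨x, r⟩` and `R = ‖r‖²`. On `α < 0` this is a parabola with vertex `a = (P + nλ)/S`, and
`f(α) − f(a) = (S/n)/2 · (α − a)² + λ(α + |α|) ≥ 0` shows that the vertex is a global minimizer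
as soon as it is negative. Conversely, comparing a negative minimizer `a` with `0` forces
`P/n + λ ≤ (S/n)/2 · a < 0`.
-/

noncomputable def scalarLasso (A B C lam α : ℝ) : ℝ := C + A / 2 * α ^ 2 - B * α + lam * |α|

section ScalarLasso

variable {A B C lam : ℝ}

theorem lt_neg_of_isMinOn_scalarLasso (hA : 0 < A) {a : ℝ}
    (hmin : IsMinOn (scalarLasso A B C lam) Set.univ a) (ha : a < 0) : B < -lam := by
  have hle : scalarLasso A B C lam a ≤ scalarLasso A B C lam 0 := hmin (Set.mem_univ 0)
  simp only [scalarLasso, abs_of_neg ha] at hle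
  have hprod : -a * (B + lam - A / 2 * a) ≤ 0 := by linarith
  have hvertex : B + lam - A / 2 * a ≤ 0 := nonpos_of_mul_nonpos_right hprod (neg_pos.mpr ha)
  have hAa : A / 2 * a < 0 := mul_neg_of_pos_of_neg (half_pos hA) ha
  linarith

theorem isMinOn_scalarLasso_of_lt_neg (hA : 0 < A) (hlam : 0 ≤ lam) (h : B < -lam) :
    IsMinOn (scalarLasso A B C lam) Set.univ ((B + lam) / A) := by
  set a := (B + lam) / A
  have ha : a < 0 := div_neg_of_neg_of_pos (by linarith) hA
  have haA : A * a = B + lam := mul_div_cancel₀ _ hA.ne'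
  intro α _
  have hdiff : scalarLasso A B C lam α - scalarLasso A B C lam a
      = A / 2 * (α - a) ^ 2 + lam * (α + |α|) := by
    simp only [scalarLasso, abs_of_neg ha]
    linear_combination (α - a) * haA
  have hsq : 0 ≤ A / 2 * (α - a) ^ 2 := by positivity
  have habs : 0 ≤ lam * (α + |α|) := mul_nonneg hlam (by linarith [neg_abs_le α])
  show scalarLasso A B C lam a ≤ scalarLasso A B C lam α
  linarith

theorem exists_neg_isMinOn_scalarLasso_iff (hA : 0 < A) (hlam : 0 ≤ lam) :
    (∃ a, IsMinOn (scalarLasso A B C lam) Set.univ a ∧ a < 0) ↔ B < -lam :=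
  ⟨fun ⟨_, hmin, ha⟩ => lt_neg_of_isMinOn_scalarLasso hA hmin ha,
    fun h => ⟨_, isMinOn_scalarLasso_of_lt_neg hA hlam h,
      div_neg_of_neg_of_pos (by linarith) hA⟩⟩

end ScalarLasso

theorem sum_sub_mul_sq {ι : Type*} (s : Finset ι) (x r : ι → ℝ) (α : ℝ) :
    ∑ i ∈ s, (r i - α * x i) ^ 2
      = ∑ i ∈ s, r i ^ 2 - 2 * α * ∑ i ∈ s, x i * r i + α ^ 2 * ∑ i ∈ s, x i ^ 2 := by
  have hexpand : ∀ i, (r i - α * x i) ^ 2 = r i ^ 2 - 2 * α * (x i * r i) + α ^ 2 * x i ^ 2 :=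
    fun i => by ring
  simp only [hexpand, sum_add_distrib, sum_sub_distrib, mul_sum]

theorem lasso_univariate_neg_minimizer_general (n : ℕ) (x r : Fin n → ℝ)
    (hx : x ≠ 0) (lam : ℝ) (hlam : 0 < lam) :
    (∃ a : ℝ,
        IsMinOn (fun α : ℝ => (1 / (2 * (n : ℝ))) * ∑ i, (r i - α * x i) ^ 2 + lam * |α|)
          Set.univ a ∧ a < 0) ↔
      ∑ i, x i * r i < -((n : ℝ) * lam) := by
  obtain ⟨j, hj⟩ : ∃ j, x j ≠ 0 := Function.ne_iff.mp hx
  have hn : (0 : ℝ) < n := by exact_mod_cast j.pos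
  have hS : 0 < ∑ i, x i ^ 2 :=
    sum_pos' (fun i _ => sq_nonneg (x i)) ⟨j, mem_univ j, by positivity⟩
  have hf : (fun α : ℝ => (1 / (2 * (n : ℝ))) * ∑ i, (r i - α * x i) ^ 2 + lam * |α|)
      = scalarLasso ((∑ i, x i ^ 2) / n) ((∑ i, x i * r i) / n) ((∑ i, r i ^ 2) / (2 * n))
          lam := by
    ext α
    rw [sum_sub_mul_sq, scalarLasso]
    field_simp
    ring
  rw [hf, exists_neg_isMinOn_scalarLasso_iff (div_pos hS hn) hlam.le, div_lt_iff₀ hn, neg_mul,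
    mul_comm]

/-- For the one-variable lasso objective
`f(α) = (1/(2n)) ‖r − α·x‖₂² + λ|α|` with `x ≠ 0` and `λ > 0`,
there is a minimizer `α* < 0` if and only if `⟨x, r⟩ < −nλ`. -/
theorem lasso_univariate_neg_minimizer (n : ℕ) (hn : 1 ≤ n) (x r : Fin n → ℝ)
    (hx : x ≠ 0) (lam : ℝ) (hlam : 0 < lam) :
    (∃ a : ℝ,
        IsMinOn (fun α : ℝ => (1 / (2 * (n : ℝ))) * ∑ i, (r i - α * x i) ^ 2 + lam * |α|)
          Set.univ a ∧ a < 0) ↔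
      ∑ i, x i * r i < -((n : ℝ) * lam) :=
  lasso_univariate_neg_minimizer_general n x r hx lam hlam
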